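/- Proposition 3.3 (saturation of the time evolutions): fix n ≥ 3 and one of the three admissible κ. For every state p ∈ 𝒫 there exists an integer l₀ ≥ 1 such that T_l(p) = T_{l₀}(p) for all l ≥ l₀. -/
import Mathlib


/- Common setup: crystals `B_l`, `B∨_l` for `U_q(sl_n^)`, combinatorial `R`, `R∨`, `R∨∨`
and the combinatorial `K` maps, following Kuniba–Okado–Yamada,
"Box-Ball System with Reflecting End".  Elements of `B_l` (and of `B∨_l`) are encoded as
integer-valued vectors indexed by `ZMod n` (coordinates read modulo `n`), membership in
`B_l` being expressed by the predicate `memB l`.  The affinization `Aff(B_l)` is encoded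
as `ℤ × (ZMod n → ℤ)`, the pair `(d, x)` standing for `z^d x`. -/

namespace BBS

abbrev V (n : ℕ) := ZMod n → ℤ

variable {n : ℕ}

/-- The candidate (for `k+1`, `0 ≤ k ≤ n-1`) in the minimum defining `Q_i(x,y)`:
`Σ_{j=1}^{k} x_{i+j} + Σ_{j=k+2}^{n} y_{i+j}`. -/
def Qt (x y : V n) (i : ZMod n) (k : ℕ) : ℤ :=
  (∑ j ∈ Finset.range k, x (i + (j : ZMod n) + 1)) +
    ∑ j ∈ Finset.Ico (k + 1) n, y (i + (j : ZMod n) + 1)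

/-- `Qe x y i = Q_i(x,y) = min_{1 ≤ k ≤ n} ( Σ_{j=1}^{k−1} x_{i+j} + Σ_{j=k+1}^{n} y_{i+j} )`. -/
def Qe (x y : V n) (i : ZMod n) : ℤ :=
  Finset.fold min (Qt x y i 0) (Qt x y i) (Finset.Ico 1 n)

/-- `Pe x y i = P_i(x,y) = min(x_{i+1}, y_{i+1})`. -/
def Pe (x y : V n) (i : ZMod n) : ℤ := min (x (i + 1)) (y (i + 1))

/-- Classical combinatorial `R : B_l ⊗ B_m → B_m ⊗ B_l`, `(x,y) ↦ (ỹ,x̃)`. -/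
def Rbar (x y : V n) : V n × V n :=
  (fun i => y i + Qe x y (i - 1) - Qe x y i, fun i => x i + Qe x y i - Qe x y (i - 1))

/-- Classical combinatorial `R∨ : B_l ⊗ B∨_m → B∨_m ⊗ B_l`, `(x,y) ↦ (ỹ,x̃)`. -/
def Rvbar (x y : V n) : V n × V n :=
  (fun i => y i + Pe x y i - Pe x y (i - 1), fun i => x i + Pe x y i - Pe x y (i - 1))

/-- Classical combinatorial `R∨∨ : B∨_l ⊗ B∨_m → B∨_m ⊗ B∨_l`, `(x,y) ↦ (ỹ,x̃)`. -/
def Rvvbar (x y : V n) : V n × V n :=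
  (fun i => y i + Qe y x i - Qe y x (i - 1), fun i => x i + Qe y x (i - 1) - Qe y x i)

/-- The affinization: `(d, x)` stands for `z^d x`. -/
abbrev Aff (n : ℕ) := ℤ × V n

/-- Affine combinatorial `R`: `z^d x ⊗ z^e y ↦ z^{e−Q₀(x,y)} ỹ ⊗ z^{d+Q₀(x,y)} x̃`. -/
def Raff (p : Aff n × Aff n) : Aff n × Aff n :=
  ((p.2.1 - Qe p.1.2 p.2.2 0, (Rbar p.1.2 p.2.2).1),
    (p.1.1 + Qe p.1.2 p.2.2 0, (Rbar p.1.2 p.2.2).2))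

/-- Affine combinatorial `R∨`: `z^d x ⊗ z^e y ↦ z^{e−P₀(x,y)} ỹ ⊗ z^{d+P₀(x,y)} x̃`. -/
def Rvee (p : Aff n × Aff n) : Aff n × Aff n :=
  ((p.2.1 - Pe p.1.2 p.2.2 0, (Rvbar p.1.2 p.2.2).1),
    (p.1.1 + Pe p.1.2 p.2.2 0, (Rvbar p.1.2 p.2.2).2))

/-- Affine combinatorial `R∨∨`: `z^d x ⊗ z^e y ↦ z^{e−Q₀(y,x)} ỹ ⊗ z^{d+Q₀(y,x)} x̃`. -/
def Rvv (p : Aff n × Aff n) : Aff n × Aff n :=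
  ((p.2.1 - Qe p.2.2 p.1.2 0, (Rvvbar p.1.2 p.2.2).1),
    (p.1.1 + Qe p.2.2 p.1.2 0, (Rvvbar p.1.2 p.2.2).2))

/-- `κ =` Rotateleft: `κ(x) = (x_2, …, x_n, x_1)`. -/
def rotL (x : V n) : V n := fun i => x (i + 1)

/-- `I` for Rotateleft: `I(x) = −x_1`. -/
def Irot (x : V n) : ℤ := -x 1

/-- `κ =` Switch₁ₙ (`n` even): exchanges the coordinate pairs
`(x_1,x_n), (x_2,x_3), (x_4,x_5), …, (x_{n−2},x_{n−1})`. -/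
def sw1n (x : V n) : V n := fun i => if i.val % 2 = 1 then x (i - 1) else x (i + 1)

/-- `I` for Switch₁ₙ: `I(x) = x_n − x_1`. -/
def I1n (x : V n) : ℤ := x 0 - x 1

/-- `κ =` Switch₁₂ (`n` even): exchanges the coordinate pairs
`(x_1,x_2), (x_3,x_4), …, (x_{n−1},x_n)`. -/
def sw12 (x : V n) : V n := fun i => if i.val % 2 = 1 then x (i + 1) else x (i - 1)

/-- `I` for Switch₁₂: `I(x) = 0`. -/
def I12 (_ : V n) : ℤ := 0

/-- Combinatorial `K : Aff(B_l) → Aff(B∨_l)`, `z^d x ↦ z^{−d+I(x)} κ(x)`. -/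
def Kmap (κ : V n → V n) (I : V n → ℤ) (q : Aff n) : Aff n := (-q.1 + I q.2, κ q.2)

/-- Combinatorial `K∨ : Aff(B∨_l) → Aff(B_l)`, `z^d x ↦ z^{−d−I(x)} κ(x)`. -/
def Kvmap (κ : V n → V n) (I : V n → ℤ) (q : Aff n) : Aff n := (-q.1 - I q.2, κ q.2)

/-- `K₂`: apply `K` to the second tensor factor. -/
def K2 (κ : V n → V n) (I : V n → ℤ) (p : Aff n × Aff n) : Aff n × Aff n :=
  (p.1, Kmap κ I p.2)

/-- `K∨₁`: apply `K∨` to the first tensor factor. -/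
def Kv1 (κ : V n → V n) (I : V n → ℤ) (p : Aff n × Aff n) : Aff n × Aff n :=
  (Kvmap κ I p.1, p.2)

/-- `x ∈ B_l` (equivalently `x ∈ B∨_l`): all coordinates nonnegative, summing to `l`. -/
def memB (l : ℕ) (x : V n) : Prop :=
  (∀ i, 0 ≤ x i) ∧ (∑ j ∈ Finset.range n, x (j : ZMod n)) = (l : ℤ)

end BBS

namespace BBS

/-- The letter `s ∈ {1, …, n}` of `B_1` (resp. `s̄` of `B∨_1`) as a unit vector. -/
def eLet (s : ℕ) : V n := fun a => if a = (s : ZMod n) then 1 else 0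

/-- The highest element `u_l = (l, 0, …, 0) ∈ B_l`. -/
def uVec (l : ℕ) : V n := fun i => if i = 1 then (l : ℤ) else 0

/-- The vacuum local state `vac = 1 ⊗ κ(1) ∈ B = B_1 ⊗ B∨_1`. -/
def vacOf (κ : V n → V n) : V n × V n := (eLet 1, κ (eLet 1))

/-- One step of the right-moving (downward) pass at a site `b = s ⊗ t` with incoming
carrier `c`: `(s†, v♯) = ōR(c, s)`, `(t†, v_next) = ōR∨(v♯, t)`; returns `((s†, t†), v_next)`. -/
def stepRfull (c : V n) (b : V n × V n) : (V n × V n) × V n :=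
  (((Rbar c b.1).1, (Rvbar (Rbar c b.1).2 b.2).1), (Rvbar (Rbar c b.1).2 b.2).2)

/-- `vCar p u N m`: the carrier of the downward pass after processing `m` sites, starting
as `u` above site `N−1` and moving toward the wall (sites are indexed `0, 1, 2, …` with
site `0` adjacent to the reflecting end). -/
def vCar (p : ℕ → V n × V n) (u : V n) (N : ℕ) : ℕ → V n
  | 0 => u
  | m + 1 => (stepRfull (vCar p u N m) (p (N - 1 - m))).2

/-- `pdag p u N k`: the intermediate state `p†_k` produced by the downward pass. -/
def pdag (p : ℕ → V n × V n) (u : V n) (N : ℕ) (k : ℕ) : V n × V n :=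
  (stepRfull (vCar p u N (N - 1 - k)) (p k)).1

/-- One step of the left-moving (upward) pass at a site `b = s† ⊗ t†` with incoming
carrier `w`: `(w♯, t') = ōR∨∨(t†, w)`, `(w_next, s') = ōR∨(s†, w♯)`;
returns `((s', t'), w_next)`. -/
def stepLfull (w : V n) (b : V n × V n) : (V n × V n) × V n :=
  (((Rvbar b.1 (Rvvbar b.2 w).1).2, (Rvvbar b.2 w).2), (Rvbar b.1 (Rvvbar b.2 w).1).1)

/-- `wCar q w0 k`: the carrier of the upward pass entering site `k`, starting as
`w0 = κ(v)` at the wall. -/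
def wCar (q : ℕ → V n × V n) (w0 : V n) : ℕ → V n
  | 0 => w0
  | k + 1 => (stepLfull (wCar q w0 k) (q k)).2

/-- The double row construction computed with cutoff `N` (all sites `≥ N` vacuum). -/
def TlAux (κ : V n → V n) (l : ℕ) (p : ℕ → V n × V n) (N : ℕ) (k : ℕ) : V n × V n :=
  (stepLfull (wCar (pdag p (uVec l) N) (κ (vCar p (uVec l) N N)) k)
    (pdag p (uVec l) N k)).1

/-- The time evolution `T_l : 𝒫 → 𝒫` (double row construction); by the results of the
paper it does not depend on the choice of the admissible cutoff `N`. -/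
noncomputable def Tl (κ : V n → V n) (l : ℕ) (p : ℕ → V n × V n) : ℕ → V n × V n :=
  haveI := Classical.propDecidable (∃ N, ∀ k, N ≤ k → p k = vacOf κ)
  if h : ∃ N, ∀ k, N ≤ k → p k = vacOf κ then TlAux κ l p h.choose else p

/-- `p` is a state of the semi-infinite automaton: every local state lies in
`B = B_1 ⊗ B∨_1` and all but finitely many local states are the vacuum. -/
def IsState (κ : V n → V n) (p : ℕ → V n × V n) : Prop :=
  (∀ k, memB 1 (p k).1 ∧ memB 1 (p k).2) ∧ ∃ N, ∀ k, N ≤ k → p k = vacOf κ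

section Aux
set_option linter.unusedSectionVars false
variable {n : ℕ} [NeZero n]

/-- Sum of coordinates over `ZMod n`. -/
def sumZ (x : V n) : ℤ := ∑ a : ZMod n, x a

/-- Indicator vector. -/
def ind (δ : ZMod n) : V n := fun a => if a = δ then 1 else 0

/-- Nonnegativity predicate. -/
def Nn (x : V n) : Prop := ∀ a, 0 ≤ x a

/-- Shift a vector by `c` at coordinate `δ`. -/
def shf (δ : ZMod n) (c : ℤ) (x : V n) : V n := fun a => x a + c * ind δ a

lemma ind_nonneg (δ : ZMod n) : Nn (ind δ) := by
  intro a; unfold ind; split <;> norm_num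

lemma ind_le_one (δ a : ZMod n) : ind δ a ≤ 1 := by
  unfold ind; split <;> norm_num

lemma sumZ_ind (δ : ZMod n) : sumZ (ind δ) = 1 := by
  simp [sumZ, ind]

lemma shf_nonneg {δ : ZMod n} {c : ℤ} {x : V n} (hx : Nn x) (hc : 0 ≤ c) :
    Nn (shf δ c x) := fun a => add_nonneg (hx a) (mul_nonneg hc (ind_nonneg δ a))

lemma hn_pos : 0 < n := Nat.pos_of_ne_zero (NeZero.ne n)

lemma sum_range_cast (x : V n) : ∑ j ∈ Finset.range n, x ((j : ℕ) : ZMod n) = sumZ x := by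
  refine Finset.sum_nbij' (fun j => ((j : ℕ) : ZMod n)) (fun a => a.val) ?_ ?_ ?_ ?_ ?_
  · intro a _; exact Finset.mem_univ _
  · intro a _; exact Finset.mem_range.mpr (ZMod.val_lt a)
  · intro a ha; exact ZMod.val_natCast_of_lt (Finset.mem_range.mp ha)
  · intro a _; exact ZMod.natCast_rightInverse a
  · intro a _; rfl

lemma sum_shift (x : V n) (i : ZMod n) :
    ∑ j ∈ Finset.range n, x (i + (j : ZMod n)) = sumZ x := by
  have h1 := sum_range_cast (fun a => x (i + a))
  rw [h1]
  exact Fintype.sum_equiv (Equiv.addLeft i) _ _ (fun a => rfl)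

lemma split1 (x : V n) (i : ZMod n) :
    sumZ x = x i + ∑ j ∈ Finset.Ico 1 n, x (i + (j : ZMod n)) := by
  rw [← sum_shift x i, Finset.range_eq_Ico, Finset.sum_eq_sum_Ico_succ_bot hn_pos]
  simp

lemma tele1 (v : V n) (Q : ZMod n → ℤ) :
    (∑ a : ZMod n, (v a + Q (a - 1) - Q a)) = sumZ v := by
  have h : ∀ a : ZMod n, v a + Q (a - 1) - Q a = v a + (Q (a - 1) - Q a) := by intro a; ring
  simp only [h]
  rw [Finset.sum_add_distrib, Finset.sum_sub_distrib]
  rw [show (∑ a : ZMod n, Q (a - 1)) = ∑ a : ZMod n, Q a from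
    Fintype.sum_equiv (Equiv.subRight (1 : ZMod n)) _ _ (fun a => rfl)]
  simp [sumZ]

lemma tele2 (v : V n) (Q : ZMod n → ℤ) :
    (∑ a : ZMod n, (v a + Q a - Q (a - 1))) = sumZ v := by
  have h : ∀ a : ZMod n, v a + Q a - Q (a - 1) = v a - (Q (a - 1) - Q a) := by intro a; ring
  simp only [h]
  rw [Finset.sum_sub_distrib, Finset.sum_sub_distrib]
  rw [show (∑ a : ZMod n, Q (a - 1)) = ∑ a : ZMod n, Q a from
    Fintype.sum_equiv (Equiv.subRight (1 : ZMod n)) _ _ (fun a => rfl)]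
  simp [sumZ]

/-! ### `Qe` lemmas -/

lemma Qt_nonneg {x y : V n} (hx : Nn x) (hy : Nn y) (i : ZMod n) (k : ℕ) :
    0 ≤ Qt x y i k :=
  add_nonneg (Finset.sum_nonneg fun _ _ => hx _) (Finset.sum_nonneg fun _ _ => hy _)

lemma Qe_le_Qt {x y : V n} {i : ZMod n} {k : ℕ} (hk : k < n) : Qe x y i ≤ Qt x y i k := by
  rw [Qe]
  rcases Nat.eq_zero_or_pos k with h | h
  · subst h; exact (Finset.fold_min_le _).mpr (Or.inl le_rfl)
  · exact (Finset.fold_min_le _).mpr (Or.inr ⟨k, Finset.mem_Ico.mpr ⟨h, hk⟩, le_rfl⟩)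

lemma le_Qe {x y : V n} {i : ZMod n} {c : ℤ} (H : ∀ k, k < n → c ≤ Qt x y i k) :
    c ≤ Qe x y i := by
  rw [Qe]
  exact (Finset.le_fold_min c).mpr ⟨H 0 hn_pos, fun k hk => H k (Finset.mem_Ico.mp hk).2⟩

lemma Qe_nonneg {x y : V n} (hx : Nn x) (hy : Nn y) (i : ZMod n) : 0 ≤ Qe x y i :=
  le_Qe fun k _ => Qt_nonneg hx hy i k

lemma Qt_zero_eq (x y : V n) (i : ZMod n) : Qt x y i 0 = sumZ y - y (i + 1) := by
  rw [Qt, Finset.range_zero, Finset.sum_empty, zero_add, split1 y (i + 1)]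
  rw [show (∑ j ∈ Finset.Ico (0 + 1) n, y (i + (j : ZMod n) + 1)) =
      ∑ j ∈ Finset.Ico 1 n, y (i + 1 + (j : ZMod n)) from
    Finset.sum_congr (by norm_num) (fun j _ => by ring_nf)]
  ring

lemma Qe_le_one {x y : V n} (hy : Nn y) (hy1 : sumZ y = 1) (i : ZMod n) :
    Qe x y i ≤ 1 := by
  refine (Qe_le_Qt hn_pos).trans ?_
  rw [Qt_zero_eq, hy1]
  have := hy (i + 1); linarith

lemma Qt_rec {x y : V n} {i : ZMod n} {k : ℕ} (hk : k + 1 < n) :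
    Qt x y (i - 1) (k + 1) + y i = x i + Qt x y i k := by
  have hx : (∑ j ∈ Finset.range (k + 1), x (i - 1 + (j : ZMod n) + 1)) =
      (∑ j ∈ Finset.range k, x (i + (j : ZMod n) + 1)) + x i := by
    rw [Finset.sum_range_succ' (fun j => x (i - 1 + (j : ZMod n) + 1)) k]
    congr 1
    · refine Finset.sum_congr rfl (fun j _ => ?_)
      congr 1; push_cast; ring
    · congr 1; push_cast; ring
  set g : ℕ → ℤ := fun m => y (i + (m : ZMod n)) with hg
  have e1 : ∀ j : ℕ, y (i + (j : ZMod n) + 1) = g (j + 1) := by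
    intro j; rw [hg]; simp only; congr 1; push_cast; ring
  have e2 : ∀ j : ℕ, y (i - 1 + (j : ZMod n) + 1) = g j := by
    intro j; rw [hg]; simp only; congr 1; push_cast; ring
  have hy : (∑ j ∈ Finset.Ico (k + 1) n, y (i + (j : ZMod n) + 1)) =
      (∑ j ∈ Finset.Ico (k + 1 + 1) n, y (i - 1 + (j : ZMod n) + 1)) + y i := by
    calc (∑ j ∈ Finset.Ico (k + 1) n, y (i + (j : ZMod n) + 1))
        = ∑ j ∈ Finset.Ico (k + 1) n, g (j + 1) := Finset.sum_congr rfl (fun j _ => e1 j)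
      _ = ∑ j ∈ Finset.Ico (k + 1 + 1) (n + 1), g j := by
          rw [Finset.sum_Ico_add' g (k + 1) n 1]
      _ = (∑ j ∈ Finset.Ico (k + 1 + 1) n, g j) + g n :=
          Finset.sum_Ico_succ_top (by omega) g
      _ = (∑ j ∈ Finset.Ico (k + 1 + 1) n, y (i - 1 + (j : ZMod n) + 1)) + y i := by
          congr 1
          · exact Finset.sum_congr rfl (fun j _ => (e2 j).symm)
          · rw [hg]; simp [ZMod.natCast_self]
  rw [Qt, Qt, hx, hy]
  ring

lemma Qt_top (x y : V n) (i : ZMod n) : x i + Qt x y i (n - 1) = sumZ x := by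
  have h1 : Finset.Ico (n - 1 + 1) n = ∅ := by
    have h2 : n - 1 + 1 = n := by have := hn_pos (n := n); omega
    rw [h2]; exact Finset.Ico_self n
  rw [Qt, h1, Finset.sum_empty, add_zero, split1 x i]
  congr 1
  rw [Finset.sum_Ico_eq_sum_range]
  refine Finset.sum_congr rfl (fun j _ => ?_)
  congr 1; push_cast; ring

lemma Qe_sub_le {x y : V n} (hx : Nn x) (hy : Nn y) (hy1 : sumZ y = 1)
    (hx1 : 1 ≤ sumZ x) (i : ZMod n) : Qe x y (i - 1) ≤ x i + Qe x y i := by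
  have H : ∀ k, k < n → Qe x y (i - 1) - x i ≤ Qt x y i k := by
    intro k hk
    rcases lt_or_ge (k + 1) n with h | h
    · have h2 : Qe x y (i - 1) ≤ Qt x y (i - 1) (k + 1) := Qe_le_Qt h
      have h3 := Qt_rec (x := x) (y := y) (i := i) h
      have := hy i; linarith
    · have hk' : k = n - 1 := by omega
      subst hk'
      have h2 : Qe x y (i - 1) ≤ 1 := Qe_le_one hy hy1 _
      have h3 := Qt_top x y i
      linarith
  have := le_Qe H; linarith

lemma Qe_le_add {x y : V n} (hx : Nn x) (hy : Nn y) (hy1 : sumZ y = 1) (i : ZMod n) :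
    Qe x y i ≤ y i + Qe x y (i - 1) := by
  have H : ∀ k, k < n → Qe x y i - y i ≤ Qt x y (i - 1) k := by
    intro k hk
    rcases Nat.eq_zero_or_pos k with rfl | h
    · have h2 : Qe x y i ≤ 1 := Qe_le_one hy hy1 _
      have h3 := Qt_zero_eq x y (i - 1)
      have h4 : i - 1 + 1 = i := by ring
      rw [h4] at h3
      rw [h3, hy1]; linarith
    · obtain ⟨k', rfl⟩ : ∃ k', k = k' + 1 := ⟨k - 1, by omega⟩
      have h3 := Qt_rec (x := x) (y := y) (i := i) hk
      have h4 : Qe x y i ≤ Qt x y i k' := Qe_le_Qt (by omega)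
      have := hx i; linarith
  have := le_Qe H; linarith

lemma Qe_shf {x y : V n} {δ : ZMod n} {c : ℤ} (hx : Nn x) (hy : Nn y)
    (hy1 : sumZ y = 1) (hδ : 1 ≤ x δ) (hc : 0 ≤ c) (i : ZMod n) :
    Qe (shf δ c x) y i = Qe x y i := by
  have hmono : ∀ k, Qt x y i k ≤ Qt (shf δ c x) y i k := by
    intro k
    unfold Qt
    gcongr with j hj
    exact le_add_of_nonneg_right (mul_nonneg hc (ind_nonneg δ _))
  refine le_antisymm ?_ (le_Qe fun k hk => (Qe_le_Qt hk).trans (hmono k))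
  have h01 : 0 ≤ Qe x y i := Qe_nonneg hx hy i
  by_cases h1 : 1 ≤ Qe x y i
  · have hle : Qe (shf δ c x) y i ≤ 1 := by
      refine (Qe_le_Qt hn_pos).trans ?_
      rw [Qt_zero_eq, hy1]
      have := hy (i + 1); linarith
    exact hle.trans h1
  · have h0 : Qe x y i = 0 := by omega
    have hex : ∃ k, k < n ∧ Qt x y i k ≤ 0 := by
      by_contra hcon
      push_neg at hcon
      have : (1 : ℤ) ≤ Qe x y i := le_Qe fun k hk => by
        have := hcon k hk; omega
      omega
    obtain ⟨k, hk, hk0⟩ := hex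
    have hQt0 : Qt x y i k = 0 := le_antisymm hk0 (Qt_nonneg hx hy i k)
    have hxpart : (∑ j ∈ Finset.range k, x (i + (j : ZMod n) + 1)) = 0 := by
      have h1' := Finset.sum_nonneg (fun j (_ : j ∈ Finset.range k) => hx (i + (j : ZMod n) + 1))
      have h2' := Finset.sum_nonneg
        (fun j (_ : j ∈ Finset.Ico (k + 1) n) => hy (i + (j : ZMod n) + 1))
      rw [Qt] at hQt0; linarith
    have hterm : ∀ j ∈ Finset.range k, x (i + (j : ZMod n) + 1) = 0 :=
      (Finset.sum_eq_zero_iff_of_nonneg (fun j _ => hx _)).mp hxpart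
    have hQts : Qt (shf δ c x) y i k = Qt x y i k := by
      unfold Qt
      congr 1
      refine Finset.sum_congr rfl (fun j hj => ?_)
      unfold shf ind
      by_cases hd : i + (j : ZMod n) + 1 = δ
      · exfalso; have := hterm j hj; rw [hd] at this; omega
      · simp [hd]
    calc Qe (shf δ c x) y i ≤ Qt (shf δ c x) y i k := Qe_le_Qt hk
    _ = 0 := by rw [hQts, hQt0]
    _ = Qe x y i := h0.symm

/-! ### `Pe` lemmas -/

lemma Pe_nonneg {x y : V n} (hx : Nn x) (hy : Nn y) (i : ZMod n) : 0 ≤ Pe x y i :=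
  le_min (hx _) (hy _)

lemma Pe_pred {x y : V n} (i : ZMod n) : Pe x y (i - 1) = min (x i) (y i) := by
  unfold Pe; rw [sub_add_cancel]

lemma le_one_of_unit {y : V n} (hy : Nn y) (h1 : sumZ y = 1) (a : ZMod n) : y a ≤ 1 := by
  have h := Finset.single_le_sum (f := y) (fun i _ => hy i) (Finset.mem_univ a)
  rw [show (∑ i : ZMod n, y i) = sumZ y from rfl, h1] at h
  exact h

lemma Pe_shf_x {x y : V n} {δ : ZMod n} {c : ℤ} (hδ : 1 ≤ x δ) (hy1 : ∀ a, y a ≤ 1)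
    (hc : 0 ≤ c) (i : ZMod n) : Pe (shf δ c x) y i = Pe x y i := by
  unfold Pe shf ind
  by_cases h : i + 1 = δ
  · rw [h, if_pos rfl, mul_one,
      min_eq_right (le_trans (hy1 δ) (by linarith : (1:ℤ) ≤ x δ + c)),
      min_eq_right (le_trans (hy1 δ) hδ)]
  · simp [h]

lemma Pe_shf_y {x y : V n} {δ : ZMod n} {c : ℤ} (hδ : 1 ≤ y δ) (hx1 : ∀ a, x a ≤ 1)
    (hc : 0 ≤ c) (i : ZMod n) : Pe x (shf δ c y) i = Pe x y i := by
  unfold Pe shf ind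
  by_cases h : i + 1 = δ
  · rw [h, if_pos rfl, mul_one,
      min_eq_left (le_trans (hx1 δ) (by linarith : (1:ℤ) ≤ y δ + c)),
      min_eq_left (le_trans (hx1 δ) hδ)]
  · simp [h]

/-! ### `Rbar` and `Rvbar` lemmas -/

lemma Rbar1_apply (x y : V n) (i : ZMod n) :
    (Rbar x y).1 i = y i + Qe x y (i - 1) - Qe x y i := rfl
lemma Rbar2_apply (x y : V n) (i : ZMod n) :
    (Rbar x y).2 i = x i + Qe x y i - Qe x y (i - 1) := rfl
lemma Rvbar1_apply (x y : V n) (i : ZMod n) :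
    (Rvbar x y).1 i = y i + Pe x y i - Pe x y (i - 1) := rfl
lemma Rvbar2_apply (x y : V n) (i : ZMod n) :
    (Rvbar x y).2 i = x i + Pe x y i - Pe x y (i - 1) := rfl

lemma Rvv_swap (x y : V n) : Rvvbar x y = ((Rbar y x).2, (Rbar y x).1) := rfl

lemma Rbar1_nonneg {x y : V n} (hx : Nn x) (hy : Nn y) (hy1 : sumZ y = 1) :
    Nn (Rbar x y).1 := by
  intro i
  rw [Rbar1_apply]
  have := Qe_le_add hx hy hy1 i
  linarith

lemma Rbar2_nonneg {x y : V n} (hx : Nn x) (hy : Nn y) (hy1 : sumZ y = 1)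
    (hx1 : 1 ≤ sumZ x) : Nn (Rbar x y).2 := by
  intro i
  rw [Rbar2_apply]
  have := Qe_sub_le hx hy hy1 hx1 i
  linarith

lemma Rbar2_ge {x y : V n} (hx : Nn x) (hy : Nn y) (hy1 : sumZ y = 1) (a : ZMod n) :
    x a - 1 ≤ (Rbar x y).2 a := by
  rw [Rbar2_apply]
  have h1 := Qe_nonneg hx hy a
  have h2 := Qe_le_one (x := x) hy hy1 (a - 1)
  linarith

lemma sumZ_Rbar1 (x y : V n) : sumZ (Rbar x y).1 = sumZ y := tele1 y (Qe x y)
lemma sumZ_Rbar2 (x y : V n) : sumZ (Rbar x y).2 = sumZ x := tele2 x (Qe x y)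
lemma sumZ_Rvbar1 (x y : V n) : sumZ (Rvbar x y).1 = sumZ y := tele2 y (Pe x y)
lemma sumZ_Rvbar2 (x y : V n) : sumZ (Rvbar x y).2 = sumZ x := tele2 x (Pe x y)

lemma Rvbar1_nonneg {x y : V n} (hx : Nn x) (hy : Nn y) : Nn (Rvbar x y).1 := by
  intro i
  rw [Rvbar1_apply, Pe_pred]
  have h1 : min (x i) (y i) ≤ y i := min_le_right _ _
  have h2 := Pe_nonneg hx hy i
  linarith

lemma Rvbar2_nonneg {x y : V n} (hx : Nn x) (hy : Nn y) : Nn (Rvbar x y).2 := by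
  intro i
  rw [Rvbar2_apply, Pe_pred]
  have h1 : min (x i) (y i) ≤ x i := min_le_left _ _
  have h2 := Pe_nonneg hx hy i
  linarith

lemma Rvbar2_ge {x y : V n} (hy1 : ∀ a, y a ≤ 1) (a : ZMod n)
    (hx : Nn x) (hy : Nn y) : x a - 1 ≤ (Rvbar x y).2 a := by
  rw [Rvbar2_apply, Pe_pred]
  have h1 : min (x a) (y a) ≤ y a := min_le_right _ _
  have h2 := Pe_nonneg hx hy a
  have := hy1 a
  linarith

lemma Rvbar1_ge {x y : V n} (hx1 : ∀ a, x a ≤ 1) (a : ZMod n)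
    (hx : Nn x) (hy : Nn y) : y a - 1 ≤ (Rvbar x y).1 a := by
  rw [Rvbar1_apply, Pe_pred]
  have h1 : min (x a) (y a) ≤ x a := min_le_left _ _
  have h2 := Pe_nonneg hx hy a
  have := hx1 a
  linarith

lemma Rbar_shf {x y : V n} {δ : ZMod n} {c : ℤ} (hx : Nn x) (hy : Nn y)
    (hy1 : sumZ y = 1) (hδ : 1 ≤ x δ) (hc : 0 ≤ c) :
    Rbar (shf δ c x) y = ((Rbar x y).1, shf δ c (Rbar x y).2) := by
  unfold Rbar
  refine Prod.ext ?_ ?_ <;> simp only <;> funext i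
  · rw [Qe_shf hx hy hy1 hδ hc, Qe_shf hx hy hy1 hδ hc]
  · rw [Qe_shf hx hy hy1 hδ hc, Qe_shf hx hy hy1 hδ hc]
    unfold shf; ring

lemma Rvbar_shf_x {x y : V n} {δ : ZMod n} {c : ℤ} (hδ : 1 ≤ x δ) (hy1 : ∀ a, y a ≤ 1)
    (hc : 0 ≤ c) :
    Rvbar (shf δ c x) y = ((Rvbar x y).1, shf δ c (Rvbar x y).2) := by
  unfold Rvbar
  refine Prod.ext ?_ ?_ <;> simp only <;> funext i
  · rw [Pe_shf_x hδ hy1 hc, Pe_shf_x hδ hy1 hc]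
  · rw [Pe_shf_x hδ hy1 hc, Pe_shf_x hδ hy1 hc]
    unfold shf; ring

lemma Rvbar_shf_y {x y : V n} {δ : ZMod n} {c : ℤ} (hδ : 1 ≤ y δ) (hx1 : ∀ a, x a ≤ 1)
    (hc : 0 ≤ c) :
    Rvbar x (shf δ c y) = (shf δ c (Rvbar x y).1, (Rvbar x y).2) := by
  unfold Rvbar
  refine Prod.ext ?_ ?_ <;> simp only <;> funext i
  · rw [Pe_shf_y hδ hx1 hc, Pe_shf_y hδ hx1 hc]
    unfold shf; ring
  · rw [Pe_shf_y hδ hx1 hc, Pe_shf_y hδ hx1 hc]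

/-! ### step lemmas -/

lemma stepR_shf {v : V n} {b : V n × V n} {δ : ZMod n} {c : ℤ}
    (hv : Nn v) (hvs : 1 ≤ sumZ v) (hvδ : 2 ≤ v δ)
    (hs : Nn b.1) (hs1 : sumZ b.1 = 1) (ht : Nn b.2) (ht1 : sumZ b.2 = 1) (hc : 0 ≤ c) :
    stepRfull (shf δ c v) b = ((stepRfull v b).1, shf δ c (stepRfull v b).2) := by
  have h1 : 1 ≤ v δ := by linarith
  have hsharp : 1 ≤ (Rbar v b.1).2 δ := by
    have := Rbar2_ge hv hs hs1 δ; linarith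
  unfold stepRfull
  rw [Rbar_shf hv hs hs1 h1 hc]
  simp only
  rw [Rvbar_shf_x hsharp (le_one_of_unit ht ht1) hc]

lemma stepR_inv {v : V n} {b : V n × V n} {δ : ZMod n}
    (hv : Nn v) (hvs : 1 ≤ sumZ v)
    (hs : Nn b.1) (hs1 : sumZ b.1 = 1) (ht : Nn b.2) (ht1 : sumZ b.2 = 1) :
    Nn (stepRfull v b).2 ∧ sumZ (stepRfull v b).2 = sumZ v ∧
      v δ - 2 ≤ (stepRfull v b).2 δ ∧
      Nn (stepRfull v b).1.1 ∧ sumZ (stepRfull v b).1.1 = 1 ∧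
      Nn (stepRfull v b).1.2 ∧ sumZ (stepRfull v b).1.2 = 1 := by
  have hvsh : Nn (Rbar v b.1).2 := Rbar2_nonneg hv hs hs1 hvs
  have hvshs : sumZ (Rbar v b.1).2 = sumZ v := sumZ_Rbar2 v b.1
  refine ⟨?_, ?_, ?_, ?_, ?_, ?_, ?_⟩
  · exact Rvbar2_nonneg hvsh ht
  · rw [show (stepRfull v b).2 = (Rvbar (Rbar v b.1).2 b.2).2 from rfl,
      sumZ_Rvbar2, hvshs]
  · have h1 := Rbar2_ge hv hs hs1 δ
    have h2 := Rvbar2_ge (x := (Rbar v b.1).2) (y := b.2) (le_one_of_unit ht ht1) δ hvsh ht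
    show v δ - 2 ≤ (Rvbar (Rbar v b.1).2 b.2).2 δ
    linarith
  · exact Rbar1_nonneg hv hs hs1
  · rw [show (stepRfull v b).1.1 = (Rbar v b.1).1 from rfl, sumZ_Rbar1, hs1]
  · exact Rvbar1_nonneg hvsh ht
  · rw [show (stepRfull v b).1.2 = (Rvbar (Rbar v b.1).2 b.2).1 from rfl,
      sumZ_Rvbar1, ht1]

lemma stepL_shf {w : V n} {b : V n × V n} {δ : ZMod n} {c : ℤ}
    (hw : Nn w) (hws : 1 ≤ sumZ w) (hwδ : 2 ≤ w δ)
    (hs : Nn b.1) (hs1 : sumZ b.1 = 1) (ht : Nn b.2) (ht1 : sumZ b.2 = 1) (hc : 0 ≤ c) :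
    stepLfull (shf δ c w) b = ((stepLfull w b).1, shf δ c (stepLfull w b).2) := by
  have h1 : 1 ≤ w δ := by linarith
  have hsharp : 1 ≤ (Rbar w b.2).2 δ := by
    have := Rbar2_ge hw ht ht1 δ; linarith
  unfold stepLfull
  rw [Rvv_swap, Rvv_swap]
  simp only
  rw [Rbar_shf hw ht ht1 h1 hc]
  simp only
  rw [Rvbar_shf_y hsharp (le_one_of_unit hs hs1) hc]

lemma stepL_inv {w : V n} {b : V n × V n} {δ : ZMod n}
    (hw : Nn w) (hws : 1 ≤ sumZ w)
    (hs : Nn b.1) (hs1 : sumZ b.1 = 1) (ht : Nn b.2) (ht1 : sumZ b.2 = 1) :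
    Nn (stepLfull w b).2 ∧ sumZ (stepLfull w b).2 = sumZ w ∧
      w δ - 2 ≤ (stepLfull w b).2 δ ∧
      Nn (stepLfull w b).1.1 ∧ sumZ (stepLfull w b).1.1 = 1 ∧
      Nn (stepLfull w b).1.2 ∧ sumZ (stepLfull w b).1.2 = 1 := by
  have hwsh : Nn (Rbar w b.2).2 := Rbar2_nonneg hw ht ht1 hws
  have hwshs : sumZ (Rbar w b.2).2 = sumZ w := sumZ_Rbar2 w b.2
  have e1 : (stepLfull w b).2 = (Rvbar b.1 (Rbar w b.2).2).1 := by
    unfold stepLfull; rw [Rvv_swap]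
  have e2 : (stepLfull w b).1.1 = (Rvbar b.1 (Rbar w b.2).2).2 := by
    unfold stepLfull; rw [Rvv_swap]
  have e3 : (stepLfull w b).1.2 = (Rbar w b.2).1 := by
    unfold stepLfull; rw [Rvv_swap]
  refine ⟨?_, ?_, ?_, ?_, ?_, ?_, ?_⟩
  · rw [e1]; exact Rvbar1_nonneg hs hwsh
  · rw [e1, sumZ_Rvbar1, hwshs]
  · rw [e1]
    have h1 := Rbar2_ge hw ht ht1 δ
    have h2 := Rvbar1_ge (x := b.1) (y := (Rbar w b.2).2) (le_one_of_unit hs hs1) δ hs hwsh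
    linarith
  · rw [e2]; exact Rvbar2_nonneg hs hwsh
  · rw [e2, sumZ_Rvbar2, hs1]
  · rw [e3]; exact Rbar1_nonneg hw ht ht1
  · rw [e3, sumZ_Rbar1, ht1]

/-! ### vacuum lemmas -/

lemma uVec_Nn (l : ℕ) : Nn (uVec l : V n) := by
  intro a; unfold uVec; split <;> positivity

lemma uVec_one (l : ℕ) : (uVec l : V n) 1 = l := if_pos rfl

lemma sumZ_uVec (l : ℕ) : sumZ (uVec l : V n) = l := by
  simp [sumZ, uVec]

lemma uVec_eq_shf {l l₀ : ℕ} (h : l₀ ≤ l) :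
    (uVec l : V n) = shf 1 ((l : ℤ) - (l₀ : ℤ)) (uVec l₀) := by
  funext a; unfold uVec shf ind
  by_cases ha : a = 1 <;> simp [ha]

lemma cast_eq_iff_val {m : ℕ} (hm : m < n) (a : ZMod n) :
    (m : ZMod n) = a ↔ m = a.val := by
  constructor
  · intro h; rw [← h, ZMod.val_natCast_of_lt hm]
  · intro h; rw [h, ZMod.natCast_rightInverse a]

lemma Qe_uVec (l : ℕ) (i : ZMod n) : Qe (uVec l : V n) (ind 1) i = 0 := by
  refine le_antisymm ?_ (Qe_nonneg (uVec_Nn l) (ind_nonneg 1) i)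
  have hnp := hn_pos (n := n)
  by_cases he : (1 : ZMod n) - i = 0
  · refine (Qe_le_Qt (k := n - 1) (by omega)).trans (le_of_eq ?_)
    have hI : Finset.Ico (n - 1 + 1) n = ∅ := by
      rw [(by omega : n - 1 + 1 = n)]; exact Finset.Ico_self n
    rw [Qt, hI, Finset.sum_empty, add_zero]
    refine Finset.sum_eq_zero (fun j hj => ?_)
    have hj' := Finset.mem_range.mp hj
    unfold uVec
    rw [if_neg]
    intro h
    have h2 : ((j + 1 : ℕ) : ZMod n) = 1 - i := by push_cast; linear_combination h
    rw [cast_eq_iff_val (by omega), he, ZMod.val_zero] at h2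
    omega
  · set d := ((1 : ZMod n) - i).val with hd
    have hdn : d < n := ZMod.val_lt _
    have hd1 : 1 ≤ d := by
      rcases Nat.eq_zero_or_pos d with h0 | h0
      · exfalso; apply he
        have := (cast_eq_iff_val (m := 0) (by omega) ((1 : ZMod n) - i)).mpr (by omega)
        simpa using this.symm
      · exact h0
    refine (Qe_le_Qt (k := d - 1) (by omega)).trans (le_of_eq ?_)
    rw [Qt]
    have hx : (∑ j ∈ Finset.range (d - 1), (uVec l : V n) (i + (j : ZMod n) + 1)) = 0 := by
      refine Finset.sum_eq_zero (fun j hj => ?_)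
      have hj' := Finset.mem_range.mp hj
      unfold uVec
      rw [if_neg]
      intro h
      have h2 : ((j + 1 : ℕ) : ZMod n) = 1 - i := by push_cast; linear_combination h
      rw [cast_eq_iff_val (by omega)] at h2
      omega
    have hy : (∑ j ∈ Finset.Ico (d - 1 + 1) n, ind (1 : ZMod n) (i + (j : ZMod n) + 1)) = 0 := by
      refine Finset.sum_eq_zero (fun j hj => ?_)
      obtain ⟨hj1, hj2⟩ := Finset.mem_Ico.mp hj
      unfold ind
      rw [if_neg]
      intro h
      have h2 : ((j + 1 : ℕ) : ZMod n) = 1 - i := by push_cast; linear_combination h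
      rcases Nat.lt_or_ge (j + 1) n with hc | hc
      · rw [cast_eq_iff_val hc] at h2; omega
      · have hjn : j + 1 = n := by omega
        rw [hjn, ZMod.natCast_self] at h2
        exact he h2.symm
    rw [hx, hy, add_zero]
  
lemma Rbar_vac (l : ℕ) : Rbar (uVec l : V n) (ind 1) = (ind 1, uVec l) := by
  unfold Rbar
  refine Prod.ext ?_ ?_ <;> simp only <;> funext i <;>
    rw [Qe_uVec, Qe_uVec] <;> ring

lemma Pe_uVec (l : ℕ) {δ' : ZMod n} (hδ : δ' ≠ 1) (i : ZMod n) :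
    Pe (uVec l : V n) (ind δ') i = 0 := by
  unfold Pe
  by_cases h : i + 1 = (1 : ZMod n)
  · rw [h]
    have h2 : ind δ' (1 : ZMod n) = 0 := if_neg (fun hh => hδ hh.symm)
    rw [h2]
    exact min_eq_right (uVec_Nn l 1)
  · have h2 : (uVec l : V n) (i + 1) = 0 := if_neg h
    rw [h2]
    exact min_eq_left (ind_nonneg δ' _)

lemma Rvbar_vac (l : ℕ) {δ' : ZMod n} (hδ : δ' ≠ 1) :
    Rvbar (uVec l : V n) (ind δ') = (ind δ', uVec l) := by
  unfold Rvbar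
  refine Prod.ext ?_ ?_ <;> simp only <;> funext i <;>
    rw [Pe_uVec l hδ, Pe_uVec l hδ] <;> ring

lemma stepR_vac (l : ℕ) {δ' : ZMod n} (hδ : δ' ≠ 1) :
    stepRfull (uVec l : V n) (ind 1, ind δ') = ((ind 1, ind δ'), uVec l) := by
  unfold stepRfull
  simp [Rbar_vac l, Rvbar_vac l hδ]

lemma stepL_vac_mono {w : V n} {δ' : ZMod n} (hδ : δ' ≠ 1) (hw : Nn w)
    (hws : 1 ≤ sumZ w) :
    w δ' ≤ (stepLfull w (ind 1, ind δ')).2 δ' := by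
  have e1 : (stepLfull w (ind 1, ind δ')).2 = (Rvbar (ind 1) (Rbar w (ind δ')).2).1 := by
    unfold stepLfull; rw [Rvv_swap]
  have hwsNn : Nn (Rbar w (ind δ')).2 :=
    Rbar2_nonneg hw (ind_nonneg δ') (sumZ_ind δ') hws
  have hQ1 : Qe w (ind δ') (δ' - 1) ≤ 0 := by
    refine (Qe_le_Qt hn_pos).trans ?_
    rw [Qt_zero_eq, sumZ_ind, sub_add_cancel]
    simp [ind]
  have hQ2 : 0 ≤ Qe w (ind δ') δ' := Qe_nonneg hw (ind_nonneg δ') δ'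
  have hws1 : w δ' ≤ (Rbar w (ind δ')).2 δ' := by
    rw [Rbar2_apply]; linarith
  rw [e1, Rvbar1_apply, Pe_pred]
  have h3 : ind (1 : ZMod n) δ' = 0 := if_neg hδ
  have h4 : min (ind (1 : ZMod n) δ') ((Rbar w (ind δ')).2 δ') = 0 := by
    rw [h3]; exact min_eq_left (hwsNn δ')
  have h5 : 0 ≤ Pe (ind 1) (Rbar w (ind δ')).2 δ' :=
    Pe_nonneg (ind_nonneg 1) hwsNn δ'
  rw [h4]; linarith

/-! ### the admissible `κ` as coordinate permutations -/

lemma val_add_one {a : ZMod n} (h : a.val + 1 < n) : (a + 1).val = a.val + 1 := by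
  have e : a + 1 = ((a.val + 1 : ℕ) : ZMod n) := by
    push_cast
    rw [ZMod.natCast_rightInverse a]
  rw [e, ZMod.val_natCast_of_lt h]

lemma val_sub_one {a : ZMod n} (h : 1 ≤ a.val) : (a - 1).val = a.val - 1 := by
  have e : a - 1 = ((a.val - 1 : ℕ) : ZMod n) := by
    rw [Nat.cast_sub h]
    push_cast
    rw [ZMod.natCast_rightInverse a]
  have := ZMod.val_lt a
  rw [e, ZMod.val_natCast_of_lt (by omega)]

lemma val_two (h : 2 < n) : ((2 : ZMod n)).val = 2 := by
  have e : ((2 : ℕ) : ZMod n) = (2 : ZMod n) := by push_cast; rfl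
  rw [← e, ZMod.val_natCast_of_lt h]

lemma pack_rot (hn : 3 ≤ n) : ∃ σ : Equiv.Perm (ZMod n), ∃ δ' : ZMod n,
    (∀ (x : V n) a, rotL x a = x (σ a)) ∧ σ δ' = 1 ∧ δ' ≠ 1 := by
  haveI : Fact (1 < n) := ⟨by omega⟩
  refine ⟨Equiv.addRight 1, 0, ?_, ?_, ?_⟩
  · intro x a; simp [rotL]
  · simp
  · exact fun h => one_ne_zero (α := ZMod n) h.symm

def g1n (n : ℕ) : ZMod n → ZMod n := fun a => if a.val % 2 = 1 then a - 1 else a + 1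

def g12 (n : ℕ) : ZMod n → ZMod n := fun a => if a.val % 2 = 1 then a + 1 else a - 1

lemma g1n_odd {a : ZMod n} (h : a.val % 2 = 1) : g1n n a = a - 1 := if_pos h
lemma g1n_even {a : ZMod n} (h : ¬ a.val % 2 = 1) : g1n n a = a + 1 := if_neg h
lemma g12_odd {a : ZMod n} (h : a.val % 2 = 1) : g12 n a = a + 1 := if_pos h
lemma g12_even {a : ZMod n} (h : ¬ a.val % 2 = 1) : g12 n a = a - 1 := if_neg h

lemma pack_sw1n (hn : 3 ≤ n) (he : Even n) : ∃ σ : Equiv.Perm (ZMod n), ∃ δ' : ZMod n,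
    (∀ (x : V n) a, sw1n x a = x (σ a)) ∧ σ δ' = 1 ∧ δ' ≠ 1 := by
  haveI : Fact (1 < n) := ⟨by omega⟩
  have hev : n % 2 = 0 := Nat.even_iff.mp he
  have hinv : Function.Involutive (g1n n) := by
    intro a
    have hlt := ZMod.val_lt a
    by_cases h : a.val % 2 = 1
    · have h1 := val_sub_one (a := a) (by omega)
      rw [g1n_odd h, g1n_even (by omega)]
      ring
    · have h1 := val_add_one (a := a) (by omega)
      rw [g1n_even h, g1n_odd (by omega)]
      ring
  refine ⟨hinv.toPerm, 0, ?_, ?_, ?_⟩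
  · intro x a
    simp only [sw1n, Function.Involutive.coe_toPerm]
    by_cases h : a.val % 2 = 1
    · rw [g1n_odd h, if_pos h]
    · rw [g1n_even h, if_neg h]
  · show g1n n 0 = 1
    rw [g1n_even (by simp [ZMod.val_zero])]
    exact zero_add 1
  · exact fun h => one_ne_zero (α := ZMod n) h.symm

lemma pack_sw12 (hn : 3 ≤ n) (he : Even n) : ∃ σ : Equiv.Perm (ZMod n), ∃ δ' : ZMod n,
    (∀ (x : V n) a, sw12 x a = x (σ a)) ∧ σ δ' = 1 ∧ δ' ≠ 1 := by
  haveI : Fact (1 < n) := ⟨by omega⟩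
  have hev : n % 2 = 0 := Nat.even_iff.mp he
  have hcast : ((n - 1 : ℕ) : ZMod n) = -1 := by
    have h0 : ((n - 1 : ℕ) : ZMod n) + 1 = 0 := by
      have e : ((n - 1 : ℕ) : ZMod n) + 1 = (((n - 1) + 1 : ℕ) : ZMod n) := by
        push_cast; ring
      rw [e, (by omega : n - 1 + 1 = n)]
      exact ZMod.natCast_self n
    linear_combination h0
  have hvalm1 : (-1 : ZMod n).val = n - 1 := by
    rw [← hcast, ZMod.val_natCast_of_lt (by omega)]
  have hinv : Function.Involutive (g12 n) := by
    intro a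
    have hlt := ZMod.val_lt a
    by_cases h : a.val % 2 = 1
    · by_cases htop : a.val = n - 1
      · have ha : a = -1 := by
          rw [← hcast, ← htop, ZMod.natCast_rightInverse a]
        rw [g12_odd h, ha, neg_add_cancel,
          g12_even (by rw [ZMod.val_zero]; omega)]
        ring
      · have h1 := val_add_one (a := a) (by omega)
        rw [g12_odd h, g12_even (by omega)]
        ring
    · by_cases hzero : a = 0
      · rw [g12_even h, hzero, zero_sub, g12_odd (by rw [hvalm1]; omega)]
        ring
      · have hv0 : a.val ≠ 0 := fun hh => hzero ((ZMod.val_eq_zero a).mp hh)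
        have h1 := val_sub_one (a := a) (by omega)
        rw [g12_even h, g12_odd (by omega)]
        ring
  refine ⟨hinv.toPerm, 2, ?_, ?_, ?_⟩
  · intro x a
    simp only [sw12, Function.Involutive.coe_toPerm]
    by_cases h : a.val % 2 = 1
    · rw [g12_odd h, if_pos h]
    · rw [g12_even h, if_neg h]
  · show g12 n 2 = 1
    rw [g12_even (by rw [val_two (by omega)]; omega)]
    ring
  · intro h
    have := congrArg ZMod.val h
    rw [val_two (by omega), ZMod.val_one n] at this
    omega
end Aux

/-- Proposition 3.3, saturation of the time evolutions: for `n ≥ 3`,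
each of the three admissible `κ`, and every state `p ∈ 𝒫`, there exists `l₀ ≥ 1` such
that `T_l(p) = T_{l₀}(p)` for all `l ≥ l₀`. -/
theorem Tl_saturation (n : ℕ) (hn : 3 ≤ n) (κ : V n → V n)
    (hκ : κ = rotL ∨ (Even n ∧ κ = sw1n) ∨ (Even n ∧ κ = sw12))
    (p : ℕ → V n × V n) (hp : IsState κ p) :
    ∃ l₀ : ℕ, 1 ≤ l₀ ∧ ∀ l, l₀ ≤ l → Tl κ l p = Tl κ l₀ p := by
  haveI : NeZero n := ⟨by omega⟩
  obtain ⟨σ, δ', hσ, hσ1, hδ1⟩ : ∃ σ : Equiv.Perm (ZMod n), ∃ δ' : ZMod n,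
      (∀ (x : V n) a, κ x a = x (σ a)) ∧ σ δ' = 1 ∧ δ' ≠ 1 := by
    rcases hκ with rfl | ⟨he, rfl⟩ | ⟨he, rfl⟩
    · exact pack_rot hn
    · exact pack_sw1n hn he
    · exact pack_sw12 hn he
  have hσiff : ∀ a : ZMod n, σ a = 1 ↔ a = δ' := by
    intro a
    constructor
    · intro h; exact σ.injective (h.trans hσ1.symm)
    · intro h; rw [h, hσ1]
  have hκshf : ∀ (x : V n) (c : ℤ), κ (shf 1 c x) = shf δ' c (κ x) := by
    intro x c
    funext a
    rw [hσ (shf 1 c x) a]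
    unfold shf
    rw [hσ x a]
    congr 1
    unfold ind
    by_cases hh : σ a = 1
    · rw [if_pos hh, if_pos ((hσiff a).mp hh)]
    · rw [if_neg hh, if_neg (fun hc => hh ((hσiff a).mpr hc))]
  have hκNn : ∀ x : V n, Nn x → Nn (κ x) := fun x hx a => by rw [hσ]; exact hx _
  have hκsum : ∀ x : V n, sumZ (κ x) = sumZ x := by
    intro x
    unfold sumZ
    rw [show (∑ a : ZMod n, κ x a) = ∑ a : ZMod n, x (σ a) from
      Finset.sum_congr rfl fun a _ => hσ x a]
    exact Fintype.sum_equiv σ _ _ fun a => rfl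
  have hκδ : ∀ x : V n, κ x δ' = x 1 := fun x => by rw [hσ, hσ1]
  have hvac : vacOf κ = (ind (1 : ZMod n), ind δ') := by
    have hind : (eLet 1 : V n) = ind 1 := by
      funext a; unfold eLet ind; norm_num
    unfold vacOf
    rw [hind]
    refine Prod.ext rfl ?_
    show κ (ind 1) = ind δ'
    funext a
    rw [hσ]
    unfold ind
    by_cases hh : σ a = 1
    · rw [if_pos hh, if_pos ((hσiff a).mp hh)]
    · rw [if_neg hh, if_neg (fun hc => hh ((hσiff a).mpr hc))]
  obtain ⟨hunit0, h⟩ := hp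
  have hunit : ∀ k, Nn (p k).1 ∧ sumZ (p k).1 = 1 ∧ Nn (p k).2 ∧ sumZ (p k).2 = 1 := by
    intro k
    obtain ⟨⟨h1, h2⟩, h3, h4⟩ := hunit0 k
    refine ⟨h1, ?_, h3, ?_⟩
    · rw [← sum_range_cast (p k).1, h2]; norm_num
    · rw [← sum_range_cast (p k).2, h4]; norm_num
  set N := h.choose with hN0
  have hN : ∀ k, N ≤ k → p k = vacOf κ := h.choose_spec
  refine ⟨4 * N + 2, by omega, ?_⟩
  intro l hl
  have hTl : ∀ l' : ℕ, Tl κ l' p = TlAux κ l' p N := by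
    intro l'
    simp only [Tl]
    rw [dif_pos h]
  rw [hTl l, hTl (4 * N + 2)]
  set l₀ : ℕ := 4 * N + 2 with hl₀
  set c : ℤ := (l : ℤ) - (l₀ : ℤ) with hc0
  have hc : 0 ≤ c := by rw [hc0]; simp; exact_mod_cast hl
  have hl₀cast : (l₀ : ℤ) = 4 * (N : ℤ) + 2 := by rw [hl₀]; push_cast; ring
  have hl₀1 : (1 : ℤ) ≤ (l₀ : ℤ) := by omega
  -- downward pass
  have down : ∀ m, m ≤ N →
      vCar p (uVec l) N m = shf 1 c (vCar p (uVec l₀) N m) ∧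
      Nn (vCar p (uVec l₀) N m) ∧ sumZ (vCar p (uVec l₀) N m) = (l₀ : ℤ) ∧
      (l₀ : ℤ) - 2 * (m : ℤ) ≤ vCar p (uVec l₀) N m 1 := by
    intro m
    induction m with
    | zero =>
      intro _
      refine ⟨?_, uVec_Nn l₀, sumZ_uVec l₀, ?_⟩
      · rw [hc0]
        exact uVec_eq_shf (by omega)
      · have hv0 : vCar p (uVec l₀) N 0 = uVec l₀ := rfl
        rw [hv0, uVec_one]
        push_cast
        linarith
    | succ m ih =>
      intro hm
      obtain ⟨e, hNn, hs, hb⟩ := ih (by omega)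
      obtain ⟨hu1, hu2, hu3, hu4⟩ := hunit (N - 1 - m)
      have hmz : (m : ℤ) ≤ (N : ℤ) - 1 := by
        have hm' : (m : ℤ) + 1 ≤ (N : ℤ) := by exact_mod_cast hm
        linarith
      have hs1 : (1 : ℤ) ≤ sumZ (vCar p (uVec l₀) N m) := by rw [hs]; exact hl₀1
      have h2v : 2 ≤ vCar p (uVec l₀) N m 1 := by
        rw [hl₀cast] at hb; linarith
      have hstep := stepR_shf (δ := (1 : ZMod n)) (c := c) (b := p (N - 1 - m))
        hNn hs1 h2v hu1 hu2 hu3 hu4 hc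
      have hinv := stepR_inv (δ := (1 : ZMod n)) (b := p (N - 1 - m)) hNn hs1 hu1 hu2 hu3 hu4
      have hred : vCar p (uVec l₀) N (m + 1) =
          (stepRfull (vCar p (uVec l₀) N m) (p (N - 1 - m))).2 := rfl
      refine ⟨?_, ?_, ?_, ?_⟩
      · show (stepRfull (vCar p (uVec l) N m) (p (N - 1 - m))).2 = _
        rw [e, hstep, hred]
      · rw [hred]; exact hinv.1
      · rw [hred, hinv.2.1, hs]
      · rw [hred]
        have := hinv.2.2.1
        push_cast
        linarith
  -- the intermediate state p† does not depend on l
  have hpd : pdag p (uVec l) N = pdag p (uVec l₀) N := by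
    funext k
    obtain ⟨e, hNn, hs, hb⟩ := down (N - 1 - k) (by omega)
    obtain ⟨hu1, hu2, hu3, hu4⟩ := hunit k
    have hmz : ((N - 1 - k : ℕ) : ℤ) ≤ (N : ℤ) := by exact Nat.cast_le.mpr (by omega)
    have hs1 : (1 : ℤ) ≤ sumZ (vCar p (uVec l₀) N (N - 1 - k)) := by rw [hs]; exact hl₀1
    have h2v : 2 ≤ vCar p (uVec l₀) N (N - 1 - k) 1 := by
      rw [hl₀cast] at hb; linarith
    have hstep := stepR_shf (δ := (1 : ZMod n)) (c := c) (b := p k)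
      hNn hs1 h2v hu1 hu2 hu3 hu4 hc
    unfold pdag
    rw [e, hstep]
  -- the intermediate state consists of unit vectors
  have hq : ∀ k, Nn (pdag p (uVec l₀) N k).1 ∧ sumZ (pdag p (uVec l₀) N k).1 = 1 ∧
      Nn (pdag p (uVec l₀) N k).2 ∧ sumZ (pdag p (uVec l₀) N k).2 = 1 := by
    intro k
    obtain ⟨e, hNn, hs, hb⟩ := down (N - 1 - k) (by omega)
    obtain ⟨hu1, hu2, hu3, hu4⟩ := hunit k
    have hs1 : (1 : ℤ) ≤ sumZ (vCar p (uVec l₀) N (N - 1 - k)) := by rw [hs]; exact hl₀1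
    have hinv := stepR_inv (δ := (1 : ZMod n)) (b := p k) hNn hs1 hu1 hu2 hu3 hu4
    exact ⟨hinv.2.2.2.1, hinv.2.2.2.2.1, hinv.2.2.2.2.2.1, hinv.2.2.2.2.2.2⟩
  -- far sites of the intermediate state are vacuum
  have hqvac : ∀ k, N ≤ k → pdag p (uVec l₀) N k = (ind (1 : ZMod n), ind δ') := by
    intro k hk
    unfold pdag
    rw [show N - 1 - k = 0 from by omega]
    show (stepRfull (uVec l₀) (p k)).1 = _
    rw [hN k hk, hvac, stepR_vac l₀ hδ1]
  -- upward pass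
  have up : ∀ k,
      wCar (pdag p (uVec l₀) N) (κ (vCar p (uVec l) N N)) k =
        shf δ' c (wCar (pdag p (uVec l₀) N) (κ (vCar p (uVec l₀) N N)) k) ∧
      Nn (wCar (pdag p (uVec l₀) N) (κ (vCar p (uVec l₀) N N)) k) ∧
      sumZ (wCar (pdag p (uVec l₀) N) (κ (vCar p (uVec l₀) N N)) k) = (l₀ : ℤ) ∧
      (l₀ : ℤ) - 2 * (N : ℤ) - 2 * ((min k N : ℕ) : ℤ) ≤
        wCar (pdag p (uVec l₀) N) (κ (vCar p (uVec l₀) N N)) k δ' := by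
    intro k
    induction k with
    | zero =>
      obtain ⟨e, hNn, hs, hb⟩ := down N le_rfl
      refine ⟨?_, ?_, ?_, ?_⟩
      · show κ (vCar p (uVec l) N N) = shf δ' c (κ (vCar p (uVec l₀) N N))
        rw [e, hκshf]
      · exact hκNn _ hNn
      · show sumZ (κ _) = _
        rw [hκsum, hs]
      · show _ ≤ κ (vCar p (uVec l₀) N N) δ'
        rw [hκδ]
        simp only [Nat.min_zero, Nat.zero_min, Nat.cast_zero]
        linarith
    | succ k ih =>
      obtain ⟨e, hNn, hs, hb⟩ := ih
      obtain ⟨hu1, hu2, hu3, hu4⟩ := hq k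
      have hminN : ((min k N : ℕ) : ℤ) ≤ (N : ℤ) := by exact Nat.cast_le.mpr (by omega)
      have hws1 : (1 : ℤ) ≤ sumZ (wCar (pdag p (uVec l₀) N) (κ (vCar p (uVec l₀) N N)) k) := by
        rw [hs]; exact hl₀1
      have h2w : 2 ≤ wCar (pdag p (uVec l₀) N) (κ (vCar p (uVec l₀) N N)) k δ' := by
        rw [hl₀cast] at hb; linarith
      have hstep := stepL_shf (δ := δ') (c := c) (b := pdag p (uVec l₀) N k)
        hNn hws1 h2w hu1 hu2 hu3 hu4 hc
      have hinv := stepL_inv (δ := δ') (b := pdag p (uVec l₀) N k) hNn hws1 hu1 hu2 hu3 hu4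
      have hred : wCar (pdag p (uVec l₀) N) (κ (vCar p (uVec l₀) N N)) (k + 1) =
          (stepLfull (wCar (pdag p (uVec l₀) N) (κ (vCar p (uVec l₀) N N)) k)
            (pdag p (uVec l₀) N k)).2 := rfl
      refine ⟨?_, ?_, ?_, ?_⟩
      · show (stepLfull (wCar (pdag p (uVec l₀) N) (κ (vCar p (uVec l) N N)) k)
            (pdag p (uVec l₀) N k)).2 = _
        rw [e, hstep, hred]
      · rw [hred]; exact hinv.1
      · rw [hred, hinv.2.1, hs]
      · rw [hred]
        by_cases hkN : k < N
        · have hdrop := hinv.2.2.1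
          have hm1 : min (k + 1) N = k + 1 := by omega
          have hm2 : min k N = k := by omega
          rw [hm1]
          rw [hm2] at hb
          push_cast
          push_cast [hm2] at hb
          linarith
        · have hvk := hqvac k (by omega)
          have hmono := stepL_vac_mono hδ1 hNn hws1
          rw [hvk]
          have hm1 : min (k + 1) N = N := by omega
          have hm2 : min k N = N := by omega
          rw [hm1]
          rw [hm2] at hb
          linarith
  -- conclusion
  funext k
  show TlAux κ l p N k = TlAux κ l₀ p N k
  unfold TlAux
  rw [hpd]
  obtain ⟨e, hNn, hs, hb⟩ := up k
  obtain ⟨hu1, hu2, hu3, hu4⟩ := hq k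
  have hminN : ((min k N : ℕ) : ℤ) ≤ (N : ℤ) := by exact Nat.cast_le.mpr (by omega)
  have hws1 : (1 : ℤ) ≤ sumZ (wCar (pdag p (uVec l₀) N) (κ (vCar p (uVec l₀) N N)) k) := by
    rw [hs]; exact hl₀1
  have h2w : 2 ≤ wCar (pdag p (uVec l₀) N) (κ (vCar p (uVec l₀) N N)) k δ' := by
    rw [hl₀cast] at hb; linarith
  rw [e, stepL_shf (δ := δ') (c := c) (b := pdag p (uVec l₀) N k)
    hNn hws1 h2w hu1 hu2 hu3 hu4 hc]

end BBS
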